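/- Let m' ≥ m and n' ≥ n be positive integers. The k_q-algebra homomorphism E^q_{(m',n',m,n)} : k_q[a]_{m',n'} → k_q[a]_{m,n} maps quantum minors as follows: E^q(D_{j_0...j_{m'-1}}) = D_{l_0...l_{m-1}} if (j_0,...,j_{m'-1}) = (-m',...,-m-1,l_0,...,l_{m-1}) with -m ≤ l_0 < ... < l_{m-1} ≤ n-1, and E^q(D_{j_0...j_{m'-1}}) = 0 otherwise. Consequently E^q restricts to a surjective k_q-algebra homomorphism e^q_{(m',n',m,n)} : k_q[Δ_{m',n'}] → k_q[Δ_{m,n}]. -/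

import Mathlib

set_option maxHeartbeats 2000000
set_option synthInstance.maxHeartbeats 400000

noncomputable section

open TensorProduct

/-- `k_q = k[q, q⁻¹]`, the ring of Laurent polynomials over `k`. -/
abbrev kq (k : Type) [Field k] : Type := LaurentPolynomial k

/-- The parameter `q ∈ k_q`. -/
def qParam (k : Type) [Field k] : kq k := LaurentPolynomial.T 1

/-- The inverse parameter `q⁻¹ ∈ k_q`. -/
def qInv (k : Type) [Field k] : kq k := LaurentPolynomial.T (-1)

/-- Row indices of the generic `(m+n) × m` quantum matrix: integers `-m, ..., n-1`. -/
abbrev RowI (m n : ℕ) : Type := ↥(Finset.Icc (-(m : ℤ)) ((n : ℤ) - 1))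

/-- Column indices: integers `-m, ..., -1`. -/
abbrev ColI (m : ℕ) : Type := ↥(Finset.Icc (-(m : ℤ)) (-1 : ℤ))

/-- The defining relations of a quantum matrix algebra, with rows indexed by `R` and
columns indexed by `C`. -/
inductive QMRel (k : Type) [Field k] (R C : Type) [LinearOrder R] [LinearOrder C] :
    FreeAlgebra (kq k) (R × C) → FreeAlgebra (kq k) (R × C) → Prop
  | col (i i' : R) (j : C) (h : i < i') :
      QMRel k R C (FreeAlgebra.ι (kq k) (i, j) * FreeAlgebra.ι (kq k) (i', j))
        (qInv k • (FreeAlgebra.ι (kq k) (i', j) * FreeAlgebra.ι (kq k) (i, j)))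
  | row (i : R) (j j' : C) (h : j < j') :
      QMRel k R C (FreeAlgebra.ι (kq k) (i, j) * FreeAlgebra.ι (kq k) (i, j'))
        (qInv k • (FreeAlgebra.ι (kq k) (i, j') * FreeAlgebra.ι (kq k) (i, j)))
  | comm (i i' : R) (j j' : C) (h1 : i < i') (h2 : j' < j) :
      QMRel k R C (FreeAlgebra.ι (kq k) (i, j) * FreeAlgebra.ι (kq k) (i', j'))
        (FreeAlgebra.ι (kq k) (i', j') * FreeAlgebra.ι (kq k) (i, j))
  | qcomm (i i' : R) (j j' : C) (h1 : i < i') (h2 : j < j') :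
      QMRel k R C
        (FreeAlgebra.ι (kq k) (i, j) * FreeAlgebra.ι (kq k) (i', j') -
          FreeAlgebra.ι (kq k) (i', j') * FreeAlgebra.ι (kq k) (i, j))
        ((qInv k - qParam k) • (FreeAlgebra.ι (kq k) (i', j) * FreeAlgebra.ι (kq k) (i, j')))

/-- The quantum matrix algebra with rows indexed by `R` and columns indexed by `C`. -/
abbrev QMatG (k : Type) [Field k] (R C : Type) [LinearOrder R] [LinearOrder C] : Type :=
  RingQuot (QMRel k R C)

/-- The generator `a_{r,c}` of the quantum matrix algebra. -/
def qgen (k : Type) [Field k] (R C : Type) [LinearOrder R] [LinearOrder C] (r : R) (c : C) :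
    QMatG k R C :=
  RingQuot.mkAlgHom (kq k) (QMRel k R C) (FreeAlgebra.ι (kq k) (r, c))

/-- The rectangular quantum matrix algebra `k_q[a]_{m,n}`. -/
abbrev QMat (k : Type) [Field k] (m n : ℕ) : Type := QMatG k (RowI m n) (ColI m)

/-- The generator `a_{i,j}` of `k_q[a]_{m,n}`. -/
def av (k : Type) [Field k] (m n : ℕ) (i : RowI m n) (j : ColI m) : QMat k m n :=
  qgen k (RowI m n) (ColI m) i j

/-- The number of inversions of a map between finite linearly ordered sets. -/
def inversions {a b : ℕ} (f : Fin a → Fin b) : ℕ :=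
  ((Finset.univ : Finset (Fin a × Fin a)).filter fun p => p.1 < p.2 ∧ f p.2 < f p.1).card

/-- The coefficient `(-q)^{-ℓ}`. -/
def qCoeff (k : Type) [Field k] (l : ℕ) : kq k :=
  (-1 : kq k) ^ l * LaurentPolynomial.T (-(l : ℤ))

/-- The general quantum minor on rows `row 0 < row 1 < ⋯` and columns
`col 0 < col 1 < ⋯`:
`Σ_σ (-q)^{-ℓ(σ)} a_{row 0, col (σ 0)} ⋯ a_{row (s-1), col (σ (s-1))}`. -/
def qMinorG (k : Type) [Field k] (R C : Type) [LinearOrder R] [LinearOrder C]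
    (s : ℕ) (row : Fin s → R) (col : Fin s → C) : QMatG k R C :=
  ∑ σ : Equiv.Perm (Fin s),
    qCoeff k (inversions ⇑σ) •
      (List.ofFn fun t : Fin s => qgen k R C (row t) (col (σ t))).prod

/-- The quantum minor `D_{i_0 … i_{m-1}}` of `k_q[a]_{m,n}` on the rows in `I`. -/
def qMinor (k : Type) [Field k] (m n : ℕ) (I : Finset ℤ) (hI : I.card = m)
    (hsub : I ⊆ Finset.Icc (-(m : ℤ)) ((n : ℤ) - 1)) : QMat k m n :=
  qMinorG k (RowI m n) (ColI m) m
    (fun s => ⟨I.orderEmbOfFin hI s, hsub (Finset.orderEmbOfFin_mem I hI s)⟩)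
    (fun t => ⟨-(m : ℤ) + (t : ℕ), by
      have := t.2
      simp only [Finset.mem_Icc]
      omega⟩)

/-- The quantum grassmannian `k_q[Δ_{m,n}]`: the subalgebra of `k_q[a]_{m,n}` generated
by the quantum minors. -/
def QDeltaSub (k : Type) [Field k] (m n : ℕ) : Subalgebra (kq k) (QMat k m n) :=
  Algebra.adjoin (kq k) {x | ∃ I hI hsub, x = qMinor k m n I hI hsub}

/-- The defining property of `E^q_{(m',n',m,n)}` on the generators. -/
def EqProp (k : Type) [Field k] (m n m' n' : ℕ)
    (E : QMat k m' n' →ₐ[kq k] QMat k m n) : Prop :=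
  ∀ (i : RowI m' n') (j : ColI m'),
    E (av k m' n' i j) =
      if h : (i.1 ∈ Finset.Icc (-(m : ℤ)) ((n : ℤ) - 1)) ∧
          (j.1 ∈ Finset.Icc (-(m : ℤ)) (-1 : ℤ)) then
        av k m n ⟨i.1, h.1⟩ ⟨j.1, h.2⟩
      else if i.1 = j.1 then 1 else 0

/-!
Under `E^q` a generator `a_{ij}` survives only if it stays in the small matrix or lies on the
diagonal `i = j < -m`, where it becomes `1`. Hence a term of the expansion of `D_J` survives
only if every column `j < -m` is matched with the row `j`: this forces
`{-m',…,-m-1} ⊆ J`, forces the permutation to fix the first `m' - m` positions, and the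
surviving terms are exactly those of `D_{J ∖ {-m',…,-m-1}}`, with the same number of
inversions. Every `D_I` of `k_q[a]_{m,n}` is then `E^q(D_{{-m',…,-m-1} ∪ I})`.
-/

open Equiv Finset

namespace Fin

def natAddPerm (d : ℕ) {m : ℕ} (τ : Perm (Fin m)) : Perm (Fin (d + m)) :=
  finSumFinEquiv.permCongr (sumCongr 1 τ)

variable {d m : ℕ}

@[simp]
lemma natAddPerm_castAdd (τ : Perm (Fin m)) (i : Fin d) :
    natAddPerm d τ (Fin.castAdd m i) = Fin.castAdd m i := by
  simp [natAddPerm]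

@[simp]
lemma natAddPerm_natAdd (τ : Perm (Fin m)) (j : Fin m) :
    natAddPerm d τ (Fin.natAdd d j) = Fin.natAdd d (τ j) := by
  simp [natAddPerm]

lemma natAddPerm_injective : Function.Injective (natAddPerm d : Perm (Fin m) → _) := by
  intro τ τ' h
  ext j
  simpa using congrArg (fun σ : Perm (Fin (d + m)) => (σ (Fin.natAdd d j) : ℕ)) h

lemma exists_natAddPerm_eq {σ : Perm (Fin (d + m))}
    (hσ : ∀ i, σ (Fin.castAdd m i) = Fin.castAdd m i) : ∃ τ, natAddPerm d τ = σ := by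
  have hinl : Set.MapsTo (finSumFinEquiv.symm.permCongr σ) (Set.range Sum.inl)
      (Set.range Sum.inl) := by
    rintro _ ⟨i, rfl⟩
    exact ⟨i, by simp [hσ]⟩
  obtain ⟨⟨_, τ⟩, hτ⟩ := Perm.mem_sumCongrHom_range_of_perm_mapsTo_inl hinl
  refine ⟨τ, Equiv.ext fun t => ?_⟩
  induction t using Fin.addCases with
  | left i => simp [hσ]
  | right j =>
    simpa using congrArg (fun π : Perm (Fin d ⊕ Fin m) => finSumFinEquiv (π (Sum.inr j))) hτ

lemma inversions_natAddPerm (τ : Perm (Fin m)) :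
    inversions ⇑(natAddPerm d τ) = inversions ⇑τ := by
  symm
  unfold inversions
  refine Finset.card_bij (fun p _ => (Fin.natAdd d p.1, Fin.natAdd d p.2)) ?_ ?_ ?_
  · intro p hp
    simpa using hp
  · intro p _ q _ hpq
    simpa [Prod.ext_iff] using hpq
  · rintro ⟨a, b⟩ hab
    simp only [mem_filter, mem_univ, true_and] at hab
    cases a using Fin.addCases with
    | right i =>
      cases b using Fin.addCases with
      | right j => exact ⟨(i, j), by simpa using hab, rfl⟩
      | left j => simp only [Fin.lt_def, Fin.val_castAdd, Fin.val_natAdd] at hab; omega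
    | left i =>
      cases b using Fin.addCases <;>
        simp only [Fin.lt_def, Fin.val_castAdd, Fin.val_natAdd, natAddPerm_castAdd,
          natAddPerm_natAdd] at hab <;> omega

end Fin

lemma Finset.orderEmbOfFin_eq_append {α : Type*} [LinearOrder α] {s t u : Finset α} {d m : ℕ}
    (hs : s.card = d + m) (ht : t.card = d) (hu : u.card = m) (hstu : s = t ∪ u)
    (htu : ∀ a ∈ t, ∀ b ∈ u, a < b) :
    ⇑(s.orderEmbOfFin hs) = Fin.append (t.orderEmbOfFin ht) (u.orderEmbOfFin hu) := by
  subst hstu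
  refine (Finset.orderEmbOfFin_unique hs (fun x => ?_) fun x y hxy => ?_).symm
  · induction x using Fin.addCases <;> simp
  · induction x using Fin.addCases with
    | left i =>
      induction y using Fin.addCases with
      | left j =>
        simpa using (t.orderEmbOfFin ht).strictMono ((Fin.strictMono_castAdd m).lt_iff_lt.mp hxy)
      | right j => simpa using htu _ (orderEmbOfFin_mem t ht i) _ (orderEmbOfFin_mem u hu j)
    | right i =>
      induction y using Fin.addCases with
      | left j => simp only [Fin.lt_def, Fin.val_castAdd, Fin.val_natAdd] at hxy; omega
      | right j => simpa using (u.orderEmbOfFin hu).strictMono ((Fin.natAdd_lt_natAdd_iff d).mp hxy)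

lemma Int.orderEmbOfFin_Icc {a b : ℤ} {d : ℕ} (h : (Icc a b).card = d) (i : Fin d) :
    (Icc a b).orderEmbOfFin h i = a + i := by
  refine (congrFun (Finset.orderEmbOfFin_unique h (f := fun i : Fin d => a + i)
    (fun i => ?_) fun i j hij => ?_) i).symm
  · rw [Int.card_Icc] at h
    have := i.isLt
    simp only [mem_Icc]
    omega
  · simpa using hij

lemma AlgHom.map_qMinorG {k : Type} [Field k] {R C : Type} [LinearOrder R] [LinearOrder C]
    {A : Type*} [Semiring A] [Algebra (kq k) A] (f : QMatG k R C →ₐ[kq k] A) (s : ℕ)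
    (row : Fin s → R) (col : Fin s → C) :
    f (qMinorG k R C s row col) = ∑ σ : Perm (Fin s), qCoeff k (inversions ⇑σ) •
      (List.ofFn fun t => f (qgen k R C (row t) (col (σ t)))).prod := by
  simp only [qMinorG, map_sum, map_smul, map_list_prod, List.map_ofFn, Function.comp_def]

namespace EqProp

variable {k : Type} [Field k] {m n n' : ℕ}

section

variable {m' : ℕ} {E : QMat k m' n' →ₐ[kq k] QMat k m n}

lemma map_qgen_of_mem (hE : EqProp k m n m' n' E) {i : RowI m' n'} {j : ColI m'}
    (hi : i.1 ∈ Icc (-(m : ℤ)) ((n : ℤ) - 1)) (hj : j.1 ∈ Icc (-(m : ℤ)) (-1 : ℤ)) :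
    E (qgen k _ _ i j) = qgen k _ _ ⟨i.1, hi⟩ ⟨j.1, hj⟩ := by
  simpa [av, hi, hj] using hE i j

lemma map_qgen_of_lt (hE : EqProp k m n m' n' E) {i : RowI m' n'} {j : ColI m'}
    (hij : i.1 = j.1) (hj : j.1 < -(m : ℤ)) : E (qgen k _ _ i j) = 1 := by
  have : ¬ j.1 ∈ Icc (-(m : ℤ)) (-1 : ℤ) := by simp only [mem_Icc]; omega
  simpa [av, this, hij] using hE i j

lemma mem_or_eq_of_map_qgen_ne_zero (hE : EqProp k m n m' n' E) {i : RowI m' n'} {j : ColI m'}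
    (h : E (qgen k _ _ i j) ≠ 0) :
    (i.1 ∈ Icc (-(m : ℤ)) ((n : ℤ) - 1) ∧ j.1 ∈ Icc (-(m : ℤ)) (-1 : ℤ)) ∨ i.1 = j.1 := by
  refine or_iff_not_imp_right.mpr fun hij => by_contra fun hmem => h ?_
  simpa only [av, dif_neg hmem, if_neg hij] using hE i j

lemma mem_or_eq_of_prod_ne_zero (hE : EqProp k m n m' n' E) {s : ℕ} {row : Fin s → RowI m' n'}
    {col : Fin s → ColI m'} (h : (List.ofFn fun t => E (qgen k _ _ (row t) (col t))).prod ≠ 0)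
    (t : Fin s) :
    ((row t).1 ∈ Icc (-(m : ℤ)) ((n : ℤ) - 1) ∧ (col t).1 ∈ Icc (-(m : ℤ)) (-1 : ℤ)) ∨
      (row t).1 = (col t).1 :=
  hE.mem_or_eq_of_map_qgen_ne_zero fun ht => h (List.prod_eq_zero (List.mem_ofFn.mpr ⟨t, ht⟩))

theorem map_qMinor_eq_zero (hE : EqProp k m n m' n' E) (J : Finset ℤ) (hJ : J.card = m')
    (hJsub : J ⊆ Icc (-(m' : ℤ)) ((n' : ℤ) - 1))
    (hbad : ¬ (Icc (-(m' : ℤ)) (-(m : ℤ) - 1) ⊆ J ∧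
      J \ Icc (-(m' : ℤ)) (-(m : ℤ) - 1) ⊆ Icc (-(m : ℤ)) ((n : ℤ) - 1))) :
    E (qMinor k m' n' J hJ hJsub) = 0 := by
  rw [qMinor, AlgHom.map_qMinorG]
  refine Finset.sum_eq_zero fun σ _ => smul_eq_zero_of_right _ ?_
  by_contra hne
  have key := hE.mem_or_eq_of_prod_ne_zero hne
  simp only [mem_Icc] at key
  -- In a nonzero term every column `j < -m` meets the row `j`, and every row outside
  -- `-m..n-1` equals its column, which is negative.
  refine hbad ⟨fun s hs => ?_, fun r hr => ?_⟩
  · rw [mem_Icc] at hs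
    obtain ⟨u, hu⟩ : ∃ u : Fin m', s = -(m' : ℤ) + (u : ℕ) :=
      ⟨⟨(s + m').toNat, by omega⟩, by simp only; omega⟩
    have hcol := key (σ.symm u)
    rw [apply_symm_apply, ← hu] at hcol
    have hrow : J.orderEmbOfFin hJ (σ.symm u) = s := by omega
    exact hrow ▸ orderEmbOfFin_mem J hJ _
  · obtain ⟨hrJ, hrS⟩ := mem_sdiff.mp hr
    obtain ⟨t, rfl⟩ : r ∈ Set.range (J.orderEmbOfFin hJ) := by rwa [range_orderEmbOfFin]
    have hr' := mem_Icc.mp (hJsub hrJ)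
    rw [mem_Icc] at hrS ⊢
    have := key t
    omega

end

section

variable {d : ℕ} {E : QMat k (d + m) n' →ₐ[kq k] QMat k m n}

theorem map_qMinor_of_eq_union (hE : EqProp k m n (d + m) n' E) {J I : Finset ℤ}
    (hJ : J.card = d + m) (hJsub : J ⊆ Icc (-((d + m : ℕ) : ℤ)) ((n' : ℤ) - 1))
    (hI : I.card = m) (hIsub : I ⊆ Icc (-(m : ℤ)) ((n : ℤ) - 1))
    (hJI : J = Icc (-((d + m : ℕ) : ℤ)) (-(m : ℤ) - 1) ∪ I) :
    E (qMinor k (d + m) n' J hJ hJsub) = qMinor k m n I hI hIsub := by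
  have hrow : ⇑(J.orderEmbOfFin hJ) =
      Fin.append (fun i : Fin d => -((d + m : ℕ) : ℤ) + (i : ℕ)) (I.orderEmbOfFin hI) := by
    have hS : (Icc (-((d + m : ℕ) : ℤ)) (-(m : ℤ) - 1)).card = d := by
      rw [Int.card_Icc]; omega
    rw [orderEmbOfFin_eq_append hJ hS hI hJI fun a ha b hb => ?_]
    · congr 1
      funext i
      exact Int.orderEmbOfFin_Icc hS i
    · have := mem_Icc.mp ha
      have := mem_Icc.mp (hIsub hb)
      omega
  rw [qMinor, qMinor, AlgHom.map_qMinorG, qMinorG]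
  refine (Fintype.sum_of_injective _ Fin.natAddPerm_injective _ _ (fun σ hσ => ?_)
    fun τ => ?_).symm
  · refine smul_eq_zero_of_right _ (by_contra fun hne => hσ (Fin.exists_natAddPerm_eq
      fun i => ?_))
    -- A nonzero term matches the column `-(d+m)+i` with an equal row, and that is row `i` of `J`.
    have key := hE.mem_or_eq_of_prod_ne_zero hne (σ.symm (Fin.castAdd m i))
    simp only [Equiv.apply_symm_apply, mem_Icc, Fin.val_castAdd] at key
    have hJi : J.orderEmbOfFin hJ (Fin.castAdd m i) = -((d + m : ℕ) : ℤ) + (i : ℕ) := by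
      rw [hrow, Fin.append_left]
    have hfix : σ.symm (Fin.castAdd m i) = Fin.castAdd m i :=
      (J.orderEmbOfFin hJ).injective (by omega)
    exact (σ.symm_apply_eq.mp hfix).symm
  · rw [Fin.inversions_natAddPerm, List.ofFn_add, List.prod_append]
    congr 1
    rw [eq_comm, List.prod_eq_one ?ones, one_mul]
    · congr 2
      funext j
      have hJj : J.orderEmbOfFin hJ (Fin.natAdd d j) = I.orderEmbOfFin hI j := by
        rw [hrow, Fin.append_right]
      have hi := hIsub (orderEmbOfFin_mem I hI j)
      rw [hE.map_qgen_of_mem (by simpa only [hJj] using hi) (by simp)]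
      congr 1 <;> ext <;> simp [hJj]
    · intro x hx
      obtain ⟨i, rfl⟩ := List.mem_ofFn.mp hx
      have hi : Fin.castLE (Nat.le_add_right d m) i = Fin.castAdd m i := rfl
      apply hE.map_qgen_of_lt <;>
        simp only [hi, hrow, Fin.append_left, Fin.natAddPerm_castAdd, Fin.val_castAdd]
      omega

theorem map_qMinor_mem_QDeltaSub (hE : EqProp k m n (d + m) n' E) (J : Finset ℤ)
    (hJ : J.card = d + m) (hJsub : J ⊆ Icc (-((d + m : ℕ) : ℤ)) ((n' : ℤ) - 1)) :
    E (qMinor k (d + m) n' J hJ hJsub) ∈ QDeltaSub k m n := by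
  by_cases hgood : Icc (-((d + m : ℕ) : ℤ)) (-(m : ℤ) - 1) ⊆ J ∧
      J \ Icc (-((d + m : ℕ) : ℤ)) (-(m : ℤ) - 1) ⊆ Icc (-(m : ℤ)) ((n : ℤ) - 1)
  · have hI : (J \ Icc (-((d + m : ℕ) : ℤ)) (-(m : ℤ) - 1)).card = m := by
      rw [card_sdiff_of_subset hgood.1, Int.card_Icc, hJ]
      omega
    rw [hE.map_qMinor_of_eq_union hJ hJsub hI hgood.2 (union_sdiff_of_subset hgood.1).symm]
    exact Algebra.subset_adjoin ⟨_, hI, hgood.2, rfl⟩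
  · rw [hE.map_qMinor_eq_zero J hJ hJsub hgood]
    exact zero_mem _

theorem qMinor_mem_image (hE : EqProp k m n (d + m) n' E) (hnn : n ≤ n') (I : Finset ℤ)
    (hI : I.card = m) (hIsub : I ⊆ Icc (-(m : ℤ)) ((n : ℤ) - 1)) :
    qMinor k m n I hI hIsub ∈
      E '' {x | ∃ J hJ hJsub, x = qMinor k (d + m) n' J hJ hJsub} := by
  have hdisj : Disjoint (Icc (-((d + m : ℕ) : ℤ)) (-(m : ℤ) - 1)) I :=
    disjoint_left.mpr fun a ha haI => by
      have := mem_Icc.mp ha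
      have := mem_Icc.mp (hIsub haI)
      omega
  have hJ : (Icc (-((d + m : ℕ) : ℤ)) (-(m : ℤ) - 1) ∪ I).card = d + m := by
    rw [card_union_of_disjoint hdisj, Int.card_Icc, hI]
    omega
  have hJsub : Icc (-((d + m : ℕ) : ℤ)) (-(m : ℤ) - 1) ∪ I ⊆
      Icc (-((d + m : ℕ) : ℤ)) ((n' : ℤ) - 1) := by
    refine union_subset (Icc_subset_Icc le_rfl (by omega)) (hIsub.trans ?_)
    exact Icc_subset_Icc (by omega) (by omega)
  exact ⟨_, ⟨_, hJ, hJsub, rfl⟩, hE.map_qMinor_of_eq_union hJ hJsub hI hIsub rfl⟩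

end

end EqProp

theorem stmt13_general (k : Type) [Field k] (m n m' n' : ℕ)
    (hmm : m ≤ m') (hnn : n ≤ n')
    (E : QMat k m' n' →ₐ[kq k] QMat k m n) (hE : EqProp k m n m' n' E) :
    (∀ (J : Finset ℤ) (hJ : J.card = m')
        (hJsub : J ⊆ Finset.Icc (-(m' : ℤ)) ((n' : ℤ) - 1)),
      (∀ (_ : Finset.Icc (-(m' : ℤ)) (-(m : ℤ) - 1) ⊆ J)
          (hIsub : J \ Finset.Icc (-(m' : ℤ)) (-(m : ℤ) - 1) ⊆
            Finset.Icc (-(m : ℤ)) ((n : ℤ) - 1))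
          (hI : (J \ Finset.Icc (-(m' : ℤ)) (-(m : ℤ) - 1)).card = m),
        E (qMinor k m' n' J hJ hJsub) =
          qMinor k m n (J \ Finset.Icc (-(m' : ℤ)) (-(m : ℤ) - 1)) hI hIsub) ∧
      (¬ (Finset.Icc (-(m' : ℤ)) (-(m : ℤ) - 1) ⊆ J ∧
          J \ Finset.Icc (-(m' : ℤ)) (-(m : ℤ) - 1) ⊆
            Finset.Icc (-(m : ℤ)) ((n : ℤ) - 1)) →
        E (qMinor k m' n' J hJ hJsub) = 0)) ∧
    Subalgebra.map E (QDeltaSub k m' n') = QDeltaSub k m n := by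
  obtain ⟨d, rfl⟩ := Nat.exists_eq_add_of_le' hmm
  refine ⟨fun J hJ hJsub => ⟨fun hS hIsub hI => ?_, hE.map_qMinor_eq_zero J hJ hJsub⟩, ?_⟩
  · exact hE.map_qMinor_of_eq_union hJ hJsub hI hIsub (union_sdiff_of_subset hS).symm
  rw [QDeltaSub, QDeltaSub, AlgHom.map_adjoin]
  refine le_antisymm (Algebra.adjoin_le ?_) (Algebra.adjoin_le ?_)
  · rintro _ ⟨_, ⟨J, hJ, hJsub, rfl⟩, rfl⟩
    exact hE.map_qMinor_mem_QDeltaSub J hJ hJsub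
  · rintro _ ⟨I, hI, hIsub, rfl⟩
    exact Algebra.subset_adjoin (hE.qMinor_mem_image hnn I hI hIsub)

/-- `E^q_{(m',n',m,n)}` maps the quantum minor `D_J` to
`D_{J ∖ {-m',…,-m-1}}` when `J ⊇ {-m',…,-m-1}` and the remaining rows lie in
`{-m,…,n-1}`, and to `0` otherwise; consequently it restricts to a surjection
`e^q : k_q[Δ_{m',n'}] → k_q[Δ_{m,n}]`. -/
theorem stmt13 (k : Type) [Field k] (m n m' n' : ℕ) (hm : 0 < m) (hn : 0 < n)
    (hmm : m ≤ m') (hnn : n ≤ n')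
    (E : QMat k m' n' →ₐ[kq k] QMat k m n) (hE : EqProp k m n m' n' E) :
    (∀ (J : Finset ℤ) (hJ : J.card = m')
        (hJsub : J ⊆ Finset.Icc (-(m' : ℤ)) ((n' : ℤ) - 1)),
      (∀ (_ : Finset.Icc (-(m' : ℤ)) (-(m : ℤ) - 1) ⊆ J)
          (hIsub : J \ Finset.Icc (-(m' : ℤ)) (-(m : ℤ) - 1) ⊆
            Finset.Icc (-(m : ℤ)) ((n : ℤ) - 1))
          (hI : (J \ Finset.Icc (-(m' : ℤ)) (-(m : ℤ) - 1)).card = m),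
        E (qMinor k m' n' J hJ hJsub) =
          qMinor k m n (J \ Finset.Icc (-(m' : ℤ)) (-(m : ℤ) - 1)) hI hIsub) ∧
      (¬ (Finset.Icc (-(m' : ℤ)) (-(m : ℤ) - 1) ⊆ J ∧
          J \ Finset.Icc (-(m' : ℤ)) (-(m : ℤ) - 1) ⊆
            Finset.Icc (-(m : ℤ)) ((n : ℤ) - 1)) →
        E (qMinor k m' n' J hJ hJsub) = 0)) ∧
    Subalgebra.map E (QDeltaSub k m' n') = QDeltaSub k m n :=
  stmt13_general k m n m' n' hmm hnn E hE
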